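/- For an exchangeable bivariate Gaussian mixture in which component m has strictly largest variance σ_m², the regression slope β(y) → ρ_m and the conditional variance σ²(y) → σ_m²(1 − ρ_m²) as y → ±∞. -/

import Mathlib

/-!
As `y → ±∞` the posterior weight `p_k*(y)` of a component with `σ_k < σ_m` is at most
`p_k φ_k(y) / (p_m φ_m(y))`, a Gaussian `C exp (a y² + b y)` with `a = 1/(2σ_m²) - 1/(2σ_k²) < 0`,
so it decays faster than any power of `|y|`, and `p_m*(y) → 1`. All summands of `β(y)` and
`σ²(y)` grow at most quadratically, because `μ_k(y)`, `μ(y)` and `d_k(y)` are at most linear; so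
only the `m`-th summand survives. In it `μ_m(y) - μ(y) = ∑_k p_k*(y) (μ_m(y) - μ_k(y))` still
tends to `0` after multiplication by the linear factor `d_m(y)`. Working along `cocompact ℝ`
treats both directions at once.
-/

open scoped Real BigOperators
open Filter

/-- Univariate Gaussian density. -/
noncomputable def phi1 (μ σ y : ℝ) : ℝ :=
  (Real.sqrt (2 * Real.pi * σ ^ 2))⁻¹ * Real.exp (-(y - μ) ^ 2 / (2 * σ ^ 2))

/-- Posterior component probability given Y₂ = y. -/
noncomputable def pstar (m : ℕ) (p μ σ : Fin m → ℝ) (k : Fin m) (y : ℝ) : ℝ :=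
  p k * phi1 (μ k) (σ k) y / ∑ j, p j * phi1 (μ j) (σ j) y

/-- Componentwise conditional mean line. -/
noncomputable def muk (m : ℕ) (μ ρ : Fin m → ℝ) (k : Fin m) (y : ℝ) : ℝ :=
  μ k + ρ k * (y - μ k)

/-- Conditional mean of the mixture. -/
noncomputable def mucond (m : ℕ) (p μ σ ρ : Fin m → ℝ) (y : ℝ) : ℝ :=
  ∑ k, pstar m p μ σ k y * muk m μ ρ k y

/-- Regression slope β(y) = μ'(y). -/
noncomputable def beta (m : ℕ) (p μ σ ρ : Fin m → ℝ) (y : ℝ) : ℝ :=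
  ∑ k, pstar m p μ σ k y *
    (ρ k + (muk m μ ρ k y - mucond m p μ σ ρ y) * (-(y - μ k) / σ k ^ 2))

/-- Conditional variance σ²(y) of the mixture. -/
noncomputable def sig2cond (m : ℕ) (p μ σ ρ : Fin m → ℝ) (y : ℝ) : ℝ :=
  ∑ k, pstar m p μ σ k y *
    (σ k ^ 2 * (1 - ρ k ^ 2) + (muk m μ ρ k y - mucond m p μ σ ρ y) ^ 2)

open Asymptotics Topology

namespace Asymptotics.SuperpolynomialDecay

variable {α : Type*} {l : Filter α} {k f g : α → ℝ}

theorem tendsto_mul_zero_of_isBigO {n : ℕ} (hf : SuperpolynomialDecay l k f)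
    (hg : g =O[l] fun x => k x ^ n) : Tendsto (fun x => f x * g x) l (𝓝 0) :=
  ((isBigO_refl f l).mul hg).trans_tendsto (by simpa only [mul_comm] using hf n)

end Asymptotics.SuperpolynomialDecay

section DominantWeight

variable {α ι : Type*} [Fintype ι] [DecidableEq ι] {l : Filter α} {k : α → ℝ}
  {w : ι → α → ℝ} {i₀ : ι}

theorem tendsto_weight_of_superpolynomialDecay_others (hw : ∀ x, ∑ i, w i x = 1)
    (hdecay : ∀ i ≠ i₀, SuperpolynomialDecay l k (w i)) : Tendsto (w i₀) l (𝓝 1) := by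
  have hothers : Tendsto (fun x => ∑ i ∈ Finset.univ.erase i₀, w i x) l (𝓝 0) := by
    simpa using tendsto_finsetSum (f := w) (a := fun _ => 0) (Finset.univ.erase i₀) fun i hi =>
      by simpa using hdecay i (Finset.ne_of_mem_erase hi) 0
  have h := (tendsto_const_nhds (x := (1 : ℝ)) (f := l)).sub hothers
  rw [sub_zero] at h
  refine h.congr fun x => ?_
  rw [← hw x, ← Finset.add_sum_erase _ _ (Finset.mem_univ i₀), add_sub_cancel_right]

theorem tendsto_weighted_sum_of_superpolynomialDecay_others (hw : ∀ x, ∑ i, w i x = 1)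
    (hdecay : ∀ i ≠ i₀, SuperpolynomialDecay l k (w i)) {f : ι → α → ℝ} {c : ℝ} {n : ℕ}
    (hf₀ : Tendsto (f i₀) l (𝓝 c)) (hf : ∀ i ≠ i₀, f i =O[l] fun x => k x ^ n) :
    Tendsto (fun x => ∑ i, w i x * f i x) l (𝓝 c) := by
  have hothers : Tendsto (fun x => ∑ i ∈ Finset.univ.erase i₀, w i x * f i x) l (𝓝 0) := by
    simpa using tendsto_finsetSum (f := fun i x => w i x * f i x) (a := fun _ => 0)
      (Finset.univ.erase i₀) fun i hi =>
      (hdecay i (Finset.ne_of_mem_erase hi)).tendsto_mul_zero_of_isBigO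
        (hf i (Finset.ne_of_mem_erase hi))
  refine Tendsto.congr (fun x => Finset.add_sum_erase _ _ (Finset.mem_univ i₀)) ?_
  simpa only [one_mul, add_zero] using
    ((tendsto_weight_of_superpolynomialDecay_others hw hdecay).mul hf₀).add hothers

end DominantWeight

section PolynomialGrowth

theorem isBigO_abs_pow_cocompact {i j : ℕ} (hij : i ≤ j) :
    (fun y : ℝ => |y| ^ i) =O[cocompact ℝ] fun y => |y| ^ j := by
  refine IsBigO.of_bound 1 ?_
  filter_upwards [tendsto_norm_cocompact_atTop.eventually_ge_atTop 1] with y hy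
  simpa using pow_le_pow_right₀ hy hij

theorem isBigO_const_abs_pow_cocompact (c : ℝ) (j : ℕ) :
    (fun _ : ℝ => c) =O[cocompact ℝ] fun y => |y| ^ j :=
  (isBigO_const_one ℝ c _).trans (by simpa using isBigO_abs_pow_cocompact (Nat.zero_le j))

theorem isBigO_affine_cocompact (a b : ℝ) :
    (fun y : ℝ => a * y + b) =O[cocompact ℝ] fun y => |y| ^ 1 := by
  have hid : (fun y : ℝ => y) =O[cocompact ℝ] fun y => |y| ^ 1 := by
    simpa only [pow_one] using isBigO_abs_right.2 (isBigO_refl (fun y : ℝ => y) _)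
  exact (hid.const_mul_left a).add (isBigO_const_abs_pow_cocompact b 1)

theorem Asymptotics.IsBigO.mul_abs_pow {f g : ℝ → ℝ} {i j : ℕ}
    (hf : f =O[cocompact ℝ] fun y => |y| ^ i)
    (hg : g =O[cocompact ℝ] fun y => |y| ^ j) :
    (fun y => f y * g y) =O[cocompact ℝ] fun y => |y| ^ (i + j) := by
  simpa only [pow_add] using hf.mul hg

end PolynomialGrowth

theorem superpolynomialDecay_exp_quadratic {a : ℝ} (ha : a < 0) (b : ℝ) :
    SuperpolynomialDecay (cocompact ℝ) (fun y => |y|) fun y => Real.exp (a * y ^ 2 + b * y) := by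
  rw [superpolynomialDecay_iff_isLittleO _
    ((tendsto_norm_cocompact_atTop (E := ℝ)).congr Real.norm_eq_abs)]
  intro z
  refine (cexp_neg_quadratic_isLittleO_abs_rpow_cocompact (a := a) (by simpa using ha) b z
    ).norm_left.congr (fun y => ?_) (fun y => Real.rpow_intCast _ _)
  rw [Complex.norm_exp]
  norm_cast

theorem phi1_pos {σ : ℝ} (μ y : ℝ) (hσ : σ ≠ 0) : 0 < phi1 μ σ y := by
  have : 0 < 2 * π * σ ^ 2 := by positivity
  unfold phi1
  positivity

theorem phi1_eq_mul_exp (μ σ y : ℝ) :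
    phi1 μ σ y = phi1 μ σ 0 * Real.exp (-(1 / (2 * σ ^ 2)) * y ^ 2 + μ / σ ^ 2 * y) := by
  unfold phi1
  rw [mul_assoc _ (Real.exp _), ← Real.exp_add]
  congr 2
  ring

theorem superpolynomialDecay_phi1_div_phi1 {σ σ' : ℝ} (μ μ' : ℝ) (hσ : 0 < σ) (hlt : σ < σ') :
    SuperpolynomialDecay (cocompact ℝ) (fun y => |y|) fun y => phi1 μ σ y / phi1 μ' σ' y := by
  have ha : -(1 / (2 * σ ^ 2)) + 1 / (2 * σ' ^ 2) < 0 := by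
    have : 1 / (2 * σ' ^ 2) < 1 / (2 * σ ^ 2) :=
      one_div_lt_one_div_of_lt (by positivity) (by gcongr)
    linarith
  refine ((superpolynomialDecay_exp_quadratic ha (μ / σ ^ 2 - μ' / σ' ^ 2)).const_mul
    (phi1 μ σ 0 / phi1 μ' σ' 0)).congr fun y => ?_
  rw [phi1_eq_mul_exp μ σ y, phi1_eq_mul_exp μ' σ' y, mul_div_mul_comm, ← Real.exp_sub]
  congr 2
  ring

theorem muk_isBigO {n : ℕ} (μ ρ : Fin n → ℝ) (k : Fin n) :
    muk n μ ρ k =O[cocompact ℝ] fun y => |y| ^ 1 :=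
  (isBigO_affine_cocompact (ρ k) (μ k - ρ k * μ k)).congr_left fun y => by unfold muk; ring

section Posterior

variable {n : ℕ} {p μ σ : Fin n → ℝ}

theorem pstar_nonneg (hp : ∀ k, 0 < p k) (hσ : ∀ k, σ k ≠ 0) (k : Fin n) (y : ℝ) :
    0 ≤ pstar n p μ σ k y :=
  div_nonneg (mul_pos (hp k) (phi1_pos _ _ (hσ k))).le
    (Finset.sum_nonneg fun j _ => (mul_pos (hp j) (phi1_pos _ _ (hσ j))).le)

theorem sum_pstar [NeZero n] (hp : ∀ k, 0 < p k) (hσ : ∀ k, σ k ≠ 0) (y : ℝ) :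
    ∑ k, pstar n p μ σ k y = 1 := by
  have hS : 0 < ∑ j, p j * phi1 (μ j) (σ j) y :=
    Finset.sum_pos (fun j _ => mul_pos (hp j) (phi1_pos _ _ (hσ j))) Finset.univ_nonempty
  simp only [pstar]
  rw [← Finset.sum_div, div_self hS.ne']

theorem pstar_le_div (hp : ∀ k, 0 < p k) (hσ : ∀ k, σ k ≠ 0) (k L : Fin n) (y : ℝ) :
    pstar n p μ σ k y ≤ p k * phi1 (μ k) (σ k) y / (p L * phi1 (μ L) (σ L) y) :=
  div_le_div_of_nonneg_left (mul_pos (hp k) (phi1_pos _ _ (hσ k))).le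
    (mul_pos (hp L) (phi1_pos _ _ (hσ L)))
    (Finset.single_le_sum (fun j _ => (mul_pos (hp j) (phi1_pos _ _ (hσ j))).le)
      (Finset.mem_univ L))

theorem superpolynomialDecay_pstar (hp : ∀ k, 0 < p k) (hσ : ∀ k, 0 < σ k) {k L : Fin n}
    (hkL : σ k < σ L) : SuperpolynomialDecay (cocompact ℝ) (fun y => |y|) (pstar n p μ σ k) := by
  have hσ₀ : ∀ k, σ k ≠ 0 := fun k => (hσ k).ne'
  refine (((superpolynomialDecay_phi1_div_phi1 (μ k) (μ L) (hσ k) hkL).const_mul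
    (p k / p L)).congr fun y => (mul_div_mul_comm _ _ _ _).symm).trans_abs_le fun y => ?_
  have hle := pstar_le_div (μ := μ) hp hσ₀ k L y
  have hnonneg := pstar_nonneg (μ := μ) hp hσ₀ k y
  rw [abs_of_nonneg hnonneg, abs_of_nonneg (hnonneg.trans hle)]
  exact hle

end Posterior

section ConditionalMoments

variable {n : ℕ} [NeZero n] {p μ σ ρ : Fin n → ℝ} {L : Fin n}

theorem muk_sub_mucond_eq_sum (hp : ∀ k, 0 < p k) (hσ : ∀ k, σ k ≠ 0) (L : Fin n) (y : ℝ) :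
    muk n μ ρ L y - mucond n p μ σ ρ y =
      ∑ k, pstar n p μ σ k y * (muk n μ ρ L y - muk n μ ρ k y) := by
  simp only [mul_sub, Finset.sum_sub_distrib, ← Finset.sum_mul, sum_pstar hp hσ, one_mul, mucond]

theorem tendsto_muk_sub_mucond_mul (hp : ∀ k, 0 < p k) (hσ : ∀ k, 0 < σ k)
    (hdom : ∀ k ≠ L, σ k < σ L) {g : ℝ → ℝ} {j : ℕ} (hg : g =O[cocompact ℝ] fun y => |y| ^ j) :
    Tendsto (fun y => (muk n μ ρ L y - mucond n p μ σ ρ y) * g y) (cocompact ℝ) (𝓝 0) := by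
  simp only [muk_sub_mucond_eq_sum hp (fun k => (hσ k).ne') L, Finset.sum_mul, mul_assoc]
  refine tendsto_weighted_sum_of_superpolynomialDecay_others (sum_pstar hp fun k => (hσ k).ne')
    (fun k hk => superpolynomialDecay_pstar hp hσ (hdom k hk)) ?_
    fun k _ => ((muk_isBigO μ ρ L).sub (muk_isBigO μ ρ k)).mul_abs_pow hg
  simp only [sub_self, zero_mul, tendsto_const_nhds]

theorem muk_sub_mucond_isBigO (hp : ∀ k, 0 < p k) (hσ : ∀ k, 0 < σ k)
    (hdom : ∀ k ≠ L, σ k < σ L) (k : Fin n) :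
    (fun y => muk n μ ρ k y - mucond n p μ σ ρ y) =O[cocompact ℝ] fun y => |y| ^ 1 := by
  have hL : Tendsto (fun y => muk n μ ρ L y - mucond n p μ σ ρ y) (cocompact ℝ) (𝓝 0) := by
    simpa using tendsto_muk_sub_mucond_mul (μ := μ) (ρ := ρ) hp hσ hdom
      (isBigO_const_abs_pow_cocompact 1 0)
  refine (((muk_isBigO μ ρ k).sub (muk_isBigO μ ρ L)).add
    ((hL.isBigO_one ℝ).trans (by simpa using isBigO_const_abs_pow_cocompact 1 1))).congr_left
    fun y => ?_
  ring

theorem tendsto_beta_cocompact (hp : ∀ k, 0 < p k) (hσ : ∀ k, 0 < σ k)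
    (hdom : ∀ k ≠ L, σ k < σ L) :
    Tendsto (beta n p μ σ ρ) (cocompact ℝ) (𝓝 (ρ L)) := by
  have hE : ∀ k, (fun y => -(y - μ k) / σ k ^ 2) =O[cocompact ℝ] fun y => |y| ^ 1 := fun k =>
    (isBigO_affine_cocompact (-1 / σ k ^ 2) (μ k / σ k ^ 2)).congr_left fun y => by ring
  refine tendsto_weighted_sum_of_superpolynomialDecay_others (sum_pstar hp fun k => (hσ k).ne')
    (fun k hk => superpolynomialDecay_pstar hp hσ (hdom k hk)) (n := 1 + 1) ?_ fun k _ =>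
    (isBigO_const_abs_pow_cocompact _ _).add
      ((muk_sub_mucond_isBigO hp hσ hdom k).mul_abs_pow (hE k))
  simpa using tendsto_const_nhds.add (tendsto_muk_sub_mucond_mul hp hσ hdom (hE L))

theorem tendsto_sig2cond_cocompact (hp : ∀ k, 0 < p k) (hσ : ∀ k, 0 < σ k)
    (hdom : ∀ k ≠ L, σ k < σ L) :
    Tendsto (sig2cond n p μ σ ρ) (cocompact ℝ) (𝓝 (σ L ^ 2 * (1 - ρ L ^ 2))) := by
  refine tendsto_weighted_sum_of_superpolynomialDecay_others (sum_pstar hp fun k => (hσ k).ne')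
    (fun k hk => superpolynomialDecay_pstar hp hσ (hdom k hk)) (n := 1 + 1) ?_ fun k _ =>
    (isBigO_const_abs_pow_cocompact _ _).add (by
      simpa only [sq] using (muk_sub_mucond_isBigO hp hσ hdom k).mul_abs_pow
        (muk_sub_mucond_isBigO hp hσ hdom k))
  simpa [sq] using tendsto_const_nhds.add
    (tendsto_muk_sub_mucond_mul hp hσ hdom (muk_sub_mucond_isBigO hp hσ hdom L))

end ConditionalMoments

theorem beta_sig2_limits_dominant_component_general
    (m : ℕ) (p μ σ ρ : Fin (m + 1) → ℝ)
    (hp : ∀ k, 0 < p k) (hσ : ∀ k, 0 < σ k)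
    (hdom : ∀ k, k ≠ Fin.last m → σ k < σ (Fin.last m)) :
    (Tendsto (beta (m + 1) p μ σ ρ) atTop (nhds (ρ (Fin.last m))) ∧
      Tendsto (beta (m + 1) p μ σ ρ) atBot (nhds (ρ (Fin.last m)))) ∧
    (Tendsto (sig2cond (m + 1) p μ σ ρ) atTop
        (nhds (σ (Fin.last m) ^ 2 * (1 - ρ (Fin.last m) ^ 2))) ∧
      Tendsto (sig2cond (m + 1) p μ σ ρ) atBot
        (nhds (σ (Fin.last m) ^ 2 * (1 - ρ (Fin.last m) ^ 2)))) := by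
  have hβ := tendsto_beta_cocompact (μ := μ) (ρ := ρ) hp hσ hdom
  have hs := tendsto_sig2cond_cocompact (μ := μ) (ρ := ρ) hp hσ hdom
  exact ⟨⟨hβ.mono_left atTop_le_cocompact, hβ.mono_left atBot_le_cocompact⟩,
    ⟨hs.mono_left atTop_le_cocompact, hs.mono_left atBot_le_cocompact⟩⟩

/-- If the last mixture component strictly dominates in variance, then β(y) → ρ_m and
σ²(y) → σ_m²(1 - ρ_m²) as y → ±∞. -/
theorem beta_sig2_limits_dominant_component
    (m : ℕ) (p μ σ ρ : Fin (m + 1) → ℝ)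
    (hp : ∀ k, 0 < p k) (hpsum : ∑ k, p k = 1) (hσ : ∀ k, 0 < σ k)
    (hρ : ∀ k, ρ k ∈ Set.Ioo (-1 : ℝ) 1)
    (hdom : ∀ k, k ≠ Fin.last m → σ k < σ (Fin.last m)) :
    (Tendsto (beta (m + 1) p μ σ ρ) atTop (nhds (ρ (Fin.last m))) ∧
      Tendsto (beta (m + 1) p μ σ ρ) atBot (nhds (ρ (Fin.last m)))) ∧
    (Tendsto (sig2cond (m + 1) p μ σ ρ) atTop
        (nhds (σ (Fin.last m) ^ 2 * (1 - ρ (Fin.last m) ^ 2))) ∧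
      Tendsto (sig2cond (m + 1) p μ σ ρ) atBot
        (nhds (σ (Fin.last m) ^ 2 * (1 - ρ (Fin.last m) ^ 2)))) :=
  beta_sig2_limits_dominant_component_general m p μ σ ρ hp hσ hdom
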